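/- Assume (φ1)–(φ2), let V ∈ C¹(ℝ,ℝ) with V ≥ 0, let α > 0, and let q be a twice differentiable classical solution with continuous derivative of −(φ(|u'|)u')' + V'(u) = 0 on ℝ such that q(t) → α as t → +∞, q(t) → −α as t → −∞, q'(t) > 0 for all t ∈ ℝ, and ∫_ℝ (Φ(q'(t)) + V(q(t))) dt < ∞. Then V(α) = V(−α) = 0 and V(t) > 0 for every t ∈ (−α,α). -/

import Mathlib

/-!
Since `t ↦ Φ(q') + V(q)` is a nonnegative integrable function, it comes arbitrarily
close to `0` both near `+∞` and near `-∞`; as `q → ±α` there and `V ≥ 0`, this forces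
`V(±α) = 0`. Multiplying the equation by `q'` gives the conservation law
`φ(q') q'² - Φ(q') - V(q) = const`, and the constant is `0` because along the same times
`Φ(q') → 0`, hence `q' → 0`. Finally `s ↦ φ(s) s` is strictly increasing, so
`Φ(y) = ∫₀^y φ(s) s ds < φ(y) y²` for `y > 0`; every `c ∈ (-α, α)` is a value `q(t)`, and there
`V(c) = φ(q') q'² - Φ(q') > 0`.
-/

open Real Filter Set MeasureTheory

noncomputable def Phi (φ : ℝ → ℝ) (t : ℝ) : ℝ := ∫ s in (0:ℝ)..|t|, s * φ s

def IsClassicalSolution (φ V q : ℝ → ℝ) : Prop :=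
  Differentiable ℝ q ∧
  ∀ t : ℝ, HasDerivAt
    (fun s => if deriv q s = 0 then 0 else φ |deriv q s| * deriv q s)
    (deriv V (q t)) t

def IsHeteroclinic (φ V : ℝ → ℝ) (α : ℝ) (q : ℝ → ℝ) : Prop :=
  IsClassicalSolution φ V q ∧ Differentiable ℝ (deriv q) ∧ Continuous (deriv q) ∧
  q 0 = 0 ∧ Tendsto q atTop (nhds α) ∧ Tendsto q atBot (nhds (-α))

open Topology

theorem MapClusterPt.exists_le_neBot_tendsto {α X : Type*} [TopologicalSpace X] {x : X}
    {F : Filter α} {u : α → X} (h : MapClusterPt x F u) :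
    ∃ G ≤ F, G.NeBot ∧ Tendsto u G (𝓝 x) :=
  ⟨comap u (𝓝 x) ⊓ F, inf_le_right, neBot_inf_comap_iff_map'.2 h,
    tendsto_comap.mono_left inf_le_left⟩

theorem exists_lt_of_lintegral_ofReal_lt_top {α : Type*} [MeasurableSpace α] {μ : Measure α}
    {f : α → ℝ} (hf : ∫⁻ t, ENNReal.ofReal (f t) ∂μ < ⊤) {S : Set α} (hS : MeasurableSet S)
    (hSv : μ S = ⊤) {ε : ℝ} (hε : 0 < ε) : ∃ t ∈ S, f t < ε := by
  by_contra! h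
  refine hf.ne (top_le_iff.1 ?_)
  calc (⊤ : ENNReal) = ∫⁻ _ in S, ENNReal.ofReal ε ∂μ := by
        rw [setLIntegral_const, hSv, ENNReal.mul_top (ENNReal.ofReal_pos.2 hε).ne']
    _ ≤ ∫⁻ t in S, ENNReal.ofReal (f t) ∂μ :=
        setLIntegral_mono' hS fun t ht => ENNReal.ofReal_le_ofReal (h t ht)
    _ ≤ ∫⁻ t, ENNReal.ofReal (f t) ∂μ := setLIntegral_le_lintegral _ _

theorem mapClusterPt_zero_of_lintegral_ofReal_lt_top {α : Type*} [MeasurableSpace α]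
    {μ : Measure α} {f : α → ℝ} (hf : ∫⁻ t, ENNReal.ofReal (f t) ∂μ < ⊤) (hf₀ : ∀ t, 0 ≤ f t)
    {ι : Type*} {l : Filter α} {p : ι → Prop} {S : ι → Set α} (hl : l.HasBasis p S)
    (hS : ∀ i, p i → MeasurableSet (S i) ∧ μ (S i) = ⊤) : MapClusterPt 0 l f := by
  rw [(nhds_basis_Ioo_pos 0).mapClusterPt_iff_frequently]
  intro ε hε
  rw [hl.frequently_iff]
  intro i hi
  obtain ⟨t, ht, hft⟩ := exists_lt_of_lintegral_ofReal_lt_top hf (hS i hi).1 (hS i hi).2 hε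
  exact ⟨t, ht, by linarith [hf₀ t], by linarith⟩

theorem Phi_eq_integral {φ : ℝ → ℝ} {y : ℝ} (hy : 0 ≤ y) :
    Phi φ y = ∫ s in (0:ℝ)..y, φ s * s := by
  simp only [Phi, abs_of_nonneg hy, mul_comm]

theorem Phi_nonneg {φ : ℝ → ℝ} (hφpos : ∀ t > (0:ℝ), 0 < φ t) (y : ℝ) : 0 ≤ Phi φ y := by
  refine intervalIntegral.integral_nonneg (abs_nonneg y) fun s hs => ?_
  rcases hs.1.eq_or_lt with rfl | hs₀
  · simp
  · exact (mul_pos hs₀ (hφpos s hs₀)).le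

/-- The standing assumptions `φ ∈ C¹((0,∞), (0,∞))` together with (φ1). -/
structure IsAdmissible (φ : ℝ → ℝ) : Prop where
  contDiffOn : ContDiffOn ℝ 1 φ (Ioi 0)
  pos : ∀ t > (0:ℝ), 0 < φ t
  deriv_mul_id_pos : ∀ t > (0:ℝ), 0 < deriv (fun s => φ s * s) t

noncomputable def energy (φ V q : ℝ → ℝ) (t : ℝ) : ℝ :=
  φ (deriv q t) * deriv q t * deriv q t - Phi φ (deriv q t) - V (q t)

namespace IsAdmissible

variable {φ : ℝ → ℝ}

theorem strictMonoOn_mul_id (hφ : IsAdmissible φ) :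
    StrictMonoOn (fun s => φ s * s) (Ici 0) := by
  have hIoi : StrictMonoOn (fun s => φ s * s) (Ioi 0) :=
    strictMonoOn_of_deriv_pos (convex_Ioi 0) (hφ.contDiffOn.continuousOn.mul continuousOn_id)
      (by simpa using hφ.deriv_mul_id_pos)
  intro a ha b _ hab
  rcases (mem_Ici.1 ha).eq_or_lt with rfl | ha₀
  · simpa using mul_pos (hφ.pos b hab) hab
  · exact hIoi ha₀ (ha₀.trans hab) hab

theorem intervalIntegrable_mul_id (hφ : IsAdmissible φ) {a b : ℝ} (ha : 0 ≤ a) (hb : 0 ≤ b) :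
    IntervalIntegrable (fun s => φ s * s) volume a b :=
  (hφ.strictMonoOn_mul_id.monotoneOn.mono
    fun _ hs => le_trans (le_min ha hb) hs.1).intervalIntegrable

theorem strictMonoOn_Phi (hφ : IsAdmissible φ) : StrictMonoOn (Phi φ) (Ici 0) := by
  intro a ha b hb hab
  rw [Phi_eq_integral ha, Phi_eq_integral hb, ← sub_pos,
    intervalIntegral.integral_interval_sub_left (hφ.intervalIntegrable_mul_id le_rfl hb)
      (hφ.intervalIntegrable_mul_id le_rfl ha)]
  refine intervalIntegral.intervalIntegral_pos_of_pos_on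
    (hφ.intervalIntegrable_mul_id ha hb) (fun s hs => ?_) hab
  have hs₀ : 0 < s := lt_of_le_of_lt ha hs.1
  exact mul_pos (hφ.pos s hs₀) hs₀

theorem Phi_lt (hφ : IsAdmissible φ) {y : ℝ} (hy : 0 < y) : Phi φ y < φ y * y * y := by
  have hint := hφ.intervalIntegrable_mul_id le_rfl hy.le
  have hgap : 0 < ∫ s in (0:ℝ)..y, (φ y * y - φ s * s) :=
    intervalIntegral.intervalIntegral_pos_of_pos_on (intervalIntegrable_const.sub hint)
      (fun s hs => sub_pos.2 <| hφ.strictMonoOn_mul_id hs.1.le hy.le hs.2) hy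
  rw [intervalIntegral.integral_sub intervalIntegrable_const hint,
    intervalIntegral.integral_const, smul_eq_mul, ← Phi_eq_integral hy.le] at hgap
  linarith

theorem hasDerivAt_Phi (hφ : IsAdmissible φ) {y : ℝ} (hy : 0 < y) :
    HasDerivAt (Phi φ) (y * φ y) y := by
  have hcont : ContinuousOn (fun s => s * φ s) (Ioi 0) :=
    continuousOn_id.mul hφ.contDiffOn.continuousOn
  have hint : IntervalIntegrable (fun s => s * φ s) volume 0 y := by
    simpa only [mul_comm] using hφ.intervalIntegrable_mul_id le_rfl hy.le
  refine (intervalIntegral.integral_hasDerivAt_right hint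
    (hcont.stronglyMeasurableAtFilter isOpen_Ioi _ hy)
    (hcont.continuousAt (isOpen_Ioi.mem_nhds hy))).congr_of_eventuallyEq ?_
  filter_upwards [lt_mem_nhds hy] with x hx
  rw [Phi, abs_of_pos hx]

theorem tendsto_nhds_zero_of_tendsto_Phi (hφ : IsAdmissible φ) {ι : Type*} {l : Filter ι}
    {y : ι → ℝ} (hy : ∀ i, 0 ≤ y i) (h : Tendsto (fun i => Phi φ (y i)) l (𝓝 0)) :
    Tendsto y l (𝓝 0) := by
  refine tendsto_order.2 ⟨fun a ha => .of_forall fun i => ha.trans_le (hy i), fun b hb => ?_⟩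
  have hPhi_b : 0 < Phi φ b := by
    simpa [Phi] using hφ.strictMonoOn_Phi self_mem_Ici hb.le hb
  filter_upwards [h.eventually_lt_const hPhi_b] with i hi
  exact (hφ.strictMonoOn_Phi.lt_iff_lt (hy i) hb.le).1 hi

theorem tendsto_mul_self_of_tendsto_Phi (hφ : IsAdmissible φ) {ι : Type*} {l : Filter ι}
    {y : ι → ℝ} (hy : ∀ i, 0 ≤ y i) (h : Tendsto (fun i => Phi φ (y i)) l (𝓝 0)) :
    Tendsto (fun i => φ (y i) * y i * y i) l (𝓝 0) := by
  have hy₀ := hφ.tendsto_nhds_zero_of_tendsto_Phi hy h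
  have hmono := hφ.strictMonoOn_mul_id.monotoneOn
  have hg : ∀ i, 0 ≤ φ (y i) * y i := fun i => by
    simpa using hmono self_mem_Ici (hy i) (hy i)
  refine squeeze_zero' (.of_forall fun i => mul_nonneg (hg i) (hy i)) ?_
    (by simpa using hy₀.const_mul (φ 1))
  filter_upwards [hy₀.eventually_le_const one_pos] with i hi
  exact mul_le_mul_of_nonneg_right
    ((hmono (hy i) (mem_Ici.2 zero_le_one) hi).trans_eq (mul_one _)) (hy i)

theorem tendsto_energy (hφ : IsAdmissible φ) {V q : ℝ → ℝ} (hqpos : ∀ t, 0 < deriv q t)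
    {G : Filter ℝ} (hPhi : Tendsto (fun t => Phi φ (deriv q t)) G (𝓝 0))
    (hV : Tendsto (fun t => V (q t)) G (𝓝 0)) : Tendsto (energy φ V q) G (𝓝 0) := by
  have h := ((hφ.tendsto_mul_self_of_tendsto_Phi (fun t => (hqpos t).le) hPhi).sub hPhi).sub hV
  rwa [sub_zero, sub_zero] at h

end IsAdmissible

namespace IsClassicalSolution

variable {φ V q : ℝ → ℝ}

theorem hasDerivAt_energy (hq : IsClassicalSolution φ V q) (hφ : IsAdmissible φ)
    (hqpos : ∀ t, 0 < deriv q t) (hq' : Differentiable ℝ (deriv q)) (hV : Differentiable ℝ V)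
    (t : ℝ) : HasDerivAt (energy φ V q) 0 t := by
  have hflux : HasDerivAt (fun s => φ (deriv q s) * deriv q s) (deriv V (q t)) t := by
    refine (hq.2 t).congr_of_eventuallyEq (.of_forall fun s => ?_)
    simp only [if_neg (hqpos s).ne', abs_of_pos (hqpos s)]
  have hq'' := (hq' t).hasDerivAt
  have hPhi := (hφ.hasDerivAt_Phi (hqpos t)).comp t hq''
  have hVq := (hV (q t)).hasDerivAt.comp t (hq.1 t).hasDerivAt
  exact ((hflux.mul hq'').sub hPhi).sub hVq |>.congr_deriv (by ring)

theorem energy_eq_zero (hq : IsClassicalSolution φ V q) (hφ : IsAdmissible φ)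
    (hqpos : ∀ t, 0 < deriv q t) (hq' : Differentiable ℝ (deriv q)) (hV : Differentiable ℝ V)
    {G : Filter ℝ} [G.NeBot] (hG : Tendsto (energy φ V q) G (𝓝 0)) (t : ℝ) :
    energy φ V q t = 0 := by
  have hderiv := hq.hasDerivAt_energy hφ hqpos hq' hV
  have hconst : ∀ s, energy φ V q s = energy φ V q t :=
    fun s => is_const_of_deriv_eq_zero (fun r => (hderiv r).differentiableAt)
      (fun r => (hderiv r).deriv) s t
  exact tendsto_nhds_unique (tendsto_const_nhds.congr fun s => (hconst s).symm) hG

end IsClassicalSolution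

theorem statement18_general (φ V : ℝ → ℝ) (α : ℝ)
    (hφC1 : ContDiffOn ℝ 1 φ (Set.Ioi 0))
    (hφpos : ∀ t > (0:ℝ), 0 < φ t)
    (hφ1 : ∀ t > (0:ℝ), 0 < deriv (fun s => φ s * s) t)
    (hV1 : ContDiff ℝ 1 V) (hVnn : ∀ t, 0 ≤ V t)
    (q : ℝ → ℝ) (hq : IsClassicalSolution φ V q)
    (hq' : Differentiable ℝ (deriv q))
    (hqtop : Tendsto q atTop (nhds α)) (hqbot : Tendsto q atBot (nhds (-α)))
    (hqpos : ∀ t : ℝ, 0 < deriv q t)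
    (hfin : (∫⁻ t : ℝ, ENNReal.ofReal (Phi φ (deriv q t) + V (q t))) < ⊤) :
    V α = 0 ∧ V (-α) = 0 ∧ ∀ t, -α < t → t < α → 0 < V t := by
  have hφ : IsAdmissible φ := ⟨hφC1, hφpos, hφ1⟩
  have he : ∀ t, 0 ≤ Phi φ (deriv q t) + V (q t) :=
    fun t => add_nonneg (Phi_nonneg hφpos _) (hVnn _)
  have hPhi {G : Filter ℝ} (h : Tendsto (fun t => Phi φ (deriv q t) + V (q t)) G (𝓝 0)) :
      Tendsto (fun t => Phi φ (deriv q t)) G (𝓝 0) :=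
    squeeze_zero (fun t => Phi_nonneg hφpos _) (fun t => le_add_of_nonneg_right (hVnn _)) h
  have hVq {G : Filter ℝ} (h : Tendsto (fun t => Phi φ (deriv q t) + V (q t)) G (𝓝 0)) :
      Tendsto (fun t => V (q t)) G (𝓝 0) :=
    squeeze_zero (fun t => hVnn _) (fun t => le_add_of_nonneg_left (Phi_nonneg hφpos _)) h
  obtain ⟨Gtop, hGtop, _, heGtop⟩ := (mapClusterPt_zero_of_lintegral_ofReal_lt_top hfin he
    atTop_basis fun _ _ => ⟨measurableSet_Ici, volume_Ici⟩).exists_le_neBot_tendsto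
  obtain ⟨Gbot, hGbot, _, heGbot⟩ := (mapClusterPt_zero_of_lintegral_ofReal_lt_top hfin he
    atBot_basis fun _ _ => ⟨measurableSet_Iic, volume_Iic⟩).exists_le_neBot_tendsto
  have hVlim {G : Filter ℝ} [G.NeBot] {a : ℝ}
      (h : Tendsto (fun t => Phi φ (deriv q t) + V (q t)) G (𝓝 0)) (hqa : Tendsto q G (𝓝 a)) :
      V a = 0 :=
    tendsto_nhds_unique ((hV1.continuous.tendsto a).comp hqa) (hVq h)
  have hE := hq.energy_eq_zero hφ hqpos hq' (hV1.differentiable one_ne_zero)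
    (hφ.tendsto_energy hqpos (hPhi heGtop) (hVq heGtop))
  refine ⟨hVlim heGtop (hqtop.mono_left hGtop), hVlim heGbot (hqbot.mono_left hGbot),
    fun c hc₁ hc₂ => ?_⟩
  obtain ⟨t, rfl⟩ : c ∈ range q := mem_range_of_exists_le_of_exists_ge hq.1.continuous
    ((hqbot.eventually_lt_const hc₁).exists.imp fun _ => le_of_lt)
    ((hqtop.eventually_const_lt hc₂).exists.imp fun _ => le_of_lt)
  have hEt := hE t
  rw [energy] at hEt
  linarith [hφ.Phi_lt (hqpos t)]

theorem statement18 (φ V : ℝ → ℝ) (l m α : ℝ)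
    (hφC1 : ContDiffOn ℝ 1 φ (Set.Ioi 0))
    (hφpos : ∀ t > (0:ℝ), 0 < φ t)
    (hφ1 : ∀ t > (0:ℝ), 0 < deriv (fun s => φ s * s) t)
    (hl : 1 < l) (hlm : l ≤ m)
    (hφ2 : ∀ t > (0:ℝ), l - 1 ≤ deriv (fun s => φ s * s) t / φ t ∧
      deriv (fun s => φ s * s) t / φ t ≤ m - 1)
    (hV1 : ContDiff ℝ 1 V) (hVnn : ∀ t, 0 ≤ V t)
    (hα : 0 < α)
    (q : ℝ → ℝ) (hq : IsClassicalSolution φ V q)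
    (hq' : Differentiable ℝ (deriv q)) (hqc : Continuous (deriv q))
    (hqtop : Tendsto q atTop (nhds α)) (hqbot : Tendsto q atBot (nhds (-α)))
    (hqpos : ∀ t : ℝ, 0 < deriv q t)
    (hfin : (∫⁻ t : ℝ, ENNReal.ofReal (Phi φ (deriv q t) + V (q t))) < ⊤) :
    V α = 0 ∧ V (-α) = 0 ∧ ∀ t, -α < t → t < α → 0 < V t :=
  statement18_general φ V α hφC1 hφpos hφ1 hV1 hVnn q hq hq' hqtop hqbot hqpos hfin
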